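/- Let φ ∈ Aut(P), and let Δ_φ(P) act on Ḡ = G/H by x̄ ↦ ū^{-1} x̄ (φ(u))‾ for u ∈ P. If the orbit O(x̄) of x̄ ∈ Ḡ under this action has more than one element, then every element a of ⊕_{z̄∈O(x̄)} (B⊗z) satisfying u^{-1}·a·φ(u) = a for all u ∈ P lies in Σ_{Q<P} A^{Δ_φ(P)}_{Δ_φ(Q)}; consequently the image of (⊕_{z̄∈O(x̄)} B⊗z) ∩ A^{Δ_φ(P)} in A(Δ_φ(P)) is zero. -/

import Mathlib

open scoped Classical

section Common

variable (𝒪 : Type*) [CommRing 𝒪]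
variable {A : Type*} [Ring A] [Algebra 𝒪 A]
variable {P : Type*} [Group P]

/-- `A^{Δ_φ(Q)}`: elements `a` with `u·a = a·φ(u)` for all `u ∈ Q`. -/
def intFixed (σ : P →* Aˣ) (φ : P ≃* P) (Q : Subgroup P) : Submodule 𝒪 A where
  carrier := {a | ∀ u ∈ Q, (σ u : A) * a = a * (σ (φ u) : A)}
  add_mem' := by intro a b ha hb u hu; rw [mul_add, add_mul, ha u hu, hb u hu]
  zero_mem' := by intro u hu; rw [mul_zero, zero_mul]
  smul_mem' := by intro r a ha u hu
                  rw [mul_smul_comm, smul_mul_assoc, ha u hu]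

/-- relative trace `Tr_{Δ_φ(Q)}^{Δ_φ(P)}`. -/
noncomputable def relTr [Finite P] (σ : P →* Aˣ) (φ : P ≃* P) (Q : Subgroup P) (c : A) : A :=
  ∑ᶠ x : Quotient (QuotientGroup.rightRel Q),
    ((σ x.out)⁻¹ : Aˣ) * c * (σ (φ x.out) : A)

/-- `Σ_{Q < P} A^{Δ_φ(P)}_{Δ_φ(Q)}`. -/
noncomputable def trSum [Finite P] (σ : P →* Aˣ) (φ : P ≃* P) : Submodule 𝒪 A :=
  ⨆ Q : {Q : Subgroup P // Q < ⊤},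
    Submodule.span 𝒪 (relTr σ φ Q '' (intFixed 𝒪 σ φ Q))

/-- `Σ_{Q<P} A^{Δ_φ(P)}_{Δ_φ(Q)} + 𝔭·A^{Δ_φ(P)}`. -/
noncomputable def brDen [Finite P] (𝔭 : Ideal 𝒪) (σ : P →* Aˣ) (φ : P ≃* P) : Submodule 𝒪 A :=
  trSum 𝒪 σ φ ⊔ 𝔭 • intFixed 𝒪 σ φ ⊤

end Common


/-- Let `H ⊴ G`, `Ḡ = G/H`, `P` a `p`-subgroup of `G`, `B` an `H`-interior
`G`-algebra and `A = B ⊗_{𝒪H} 𝒪G` the induced `G`-interior `Ḡ`-graded algebra (modelled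
here as a `G`-interior algebra `A` with a `Ḡ`-grading `𝒜` such that the image of `g ∈ G` is
an invertible homogeneous element of degree `ḡ`; the `z̄`-component `B⊗z` of `A` is `𝒜 z̄`).
Let `φ ∈ Aut(P)`, and let `Δ_φ(P)` act on `Ḡ` by `x̄ ↦ ū⁻¹·x̄·(φ(u))‾`.  If the orbit
`O(x̄)` of `x̄ ∈ Ḡ` has more than one element, then every element of `⊕_{z̄∈O(x̄)} (B⊗z)`
satisfying `u⁻¹·a·φ(u) = a` for all `u ∈ P` lies in `Σ_{Q<P} A^{Δ_φ(P)}_{Δ_φ(Q)}`;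
consequently the image of `(⊕_{z̄∈O(x̄)} B⊗z) ∩ A^{Δ_φ(P)}` in `A(Δ_φ(P))` is zero. -/
theorem stmt6
    (𝒪 : Type*) [CommRing 𝒪] [IsDomain 𝒪] [IsDiscreteValuationRing 𝒪]
    [IsAdicComplete (IsLocalRing.maximalIdeal 𝒪) 𝒪]
    (p : ℕ) [Fact p.Prime] [CharP (IsLocalRing.ResidueField 𝒪) p]
    (G : Type*) [Group G] [Finite G] (H P : Subgroup G) [H.Normal] (hP : IsPGroup p ↥P)
    (A : Type*) [Ring A] [Algebra 𝒪 A] (σG : G →* Aˣ)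
    (𝒜 : G ⧸ H → Submodule 𝒪 A)
    (hmul : ∀ x y : G ⧸ H, 𝒜 x * 𝒜 y ≤ 𝒜 (x * y))
    (hone : (1 : A) ∈ 𝒜 1)
    (hσ : ∀ g : G, ((σG g : Aˣ) : A) ∈ 𝒜 ↑g)
    (hdec : DirectSum.IsInternal 𝒜)
    (φ : MulAut ↥P) (xbar : G ⧸ H)
    -- the orbit `O(x̄)` of `x̄` under `Δ_φ(P)`, `x̄ ↦ ū⁻¹·x̄·(φ(u))‾`,
    -- has more than one element:
    (hO : (Set.range fun u : ↥P =>
      ((↑(↑u : G) : G ⧸ H))⁻¹ * xbar * ↑((φ u : ↥P) : G)).Nontrivial) :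
    (⨆ z ∈ Set.range (fun u : ↥P =>
        ((↑(↑u : G) : G ⧸ H))⁻¹ * xbar * ↑((φ u : ↥P) : G)), 𝒜 z) ⊓
      intFixed 𝒪 (σG.comp P.subtype) φ ⊤ ≤ trSum 𝒪 (σG.comp P.subtype) φ := by
  classical
  letI : Fintype (G ⧸ H) := Fintype.ofFinite _
  set σ : ↥P →* Aˣ := σG.comp P.subtype with hσdef
  set f : ↥P → G ⧸ H → G ⧸ H :=
    fun u z => ((↑(↑u : G) : G ⧸ H))⁻¹ * z * ↑((φ u : ↥P) : G) with hfdef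
  have hf1 : ∀ z, f 1 z = z := by intro z; simp [hfdef]
  have hfmul : ∀ u v z, f (u * v) z = f v (f u z) := by
    intro u v z
    simp only [hfdef, map_mul, Subgroup.coe_mul, QuotientGroup.mk_mul, mul_inv_rev]
    group
  have hfinv : ∀ u z, f u⁻¹ (f u z) = z := by
    intro u z; rw [← hfmul, mul_inv_cancel, hf1]
  have hfinj : ∀ u : ↥P, Function.Injective (f u) := by
    intro u z1 z2 h
    have := congrArg (f u⁻¹) h
    rwa [hfinv, hfinv] at this
  -- the projections onto homogeneous components
  set E := LinearEquiv.ofBijective (DirectSum.coeLinearMap 𝒜) hdec with hEdef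
  set π : G ⧸ H → A →ₗ[𝒪] A := fun z =>
    (𝒜 z).subtype ∘ₗ (DirectSum.component 𝒪 (G ⧸ H) (fun w => ↥(𝒜 w)) z) ∘ₗ
      E.symm.toLinearMap with hπdef
  have hπ_apply : ∀ z b, π z b = ↑(E.symm b z) := fun z b => rfl
  have hπ_mem : ∀ z b, π z b ∈ 𝒜 z := fun z b => (E.symm b z).2
  have hπ_same : ∀ {z b}, b ∈ 𝒜 z → π z b = b := by
    intro z b hb
    rw [hπ_apply, hdec.ofBijective_coeLinearMap_of_mem hb]
  have hπ_ne : ∀ {z w b}, b ∈ 𝒜 z → z ≠ w → π w b = 0 := by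
    intro z w b hb hzw
    rw [hπ_apply, hdec.ofBijective_coeLinearMap_of_mem_ne hzw hb, Submodule.coe_zero]
  have hπ_sum : ∀ b : A, ∑ z : G ⧸ H, π z b = b := by
    intro b
    have h1 : E (E.symm b) = b := E.apply_symm_apply b
    calc ∑ z : G ⧸ H, π z b
        = ∑ z : G ⧸ H, DirectSum.coeLinearMap 𝒜
            (DirectSum.of (fun w => ↥(𝒜 w)) z (E.symm b z)) := by
          refine Finset.sum_congr rfl fun z _ => ?_
          rw [DirectSum.coeLinearMap_of, hπ_apply]
      _ = DirectSum.coeLinearMap 𝒜 (∑ z : G ⧸ H,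
            DirectSum.of (fun w => ↥(𝒜 w)) z (E.symm b z)) := (map_sum _ _ _).symm
      _ = DirectSum.coeLinearMap 𝒜 (E.symm b) := by rw [DirectSum.sum_univ_of]
      _ = b := h1
  intro a ha
  obtain ⟨haO, hafix⟩ := ha
  have hafix' : ∀ u : ↥P, (↑(σ u)⁻¹ : A) * a * ↑(σ (φ u)) = a := by
    intro u
    have h := hafix u (Subgroup.mem_top u)
    rw [mul_assoc, ← h, Units.inv_mul_cancel_left]
  -- conjugation maps 𝒜 z into 𝒜 (f u z)
  have hT_mem : ∀ (u : ↥P) {z} {b : A}, b ∈ 𝒜 z →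
      (↑(σ u)⁻¹ : A) * b * ↑(σ (φ u)) ∈ 𝒜 (f u z) := by
    intro u z b hb
    have h1 : (↑(σ u)⁻¹ : A) ∈ 𝒜 ((↑(↑u : G) : G ⧸ H))⁻¹ := by
      have : (↑(σ u)⁻¹ : A) = ↑(σG ((↑u : G)⁻¹)) := by
        rw [map_inv]; rfl
      rw [this, ← QuotientGroup.mk_inv]
      exact hσ _
    have h2 : (↑(σ (φ u)) : A) ∈ 𝒜 (↑((φ u : ↥P) : G)) := hσ _
    exact hmul _ _ (Submodule.mul_mem_mul (hmul _ _ (Submodule.mul_mem_mul h1 hb)) h2)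
  -- key commutation: conjugation of the z-component of a is the (f u z)-component
  have key : ∀ (u : ↥P) (z : G ⧸ H),
      π (f u z) a = (↑(σ u)⁻¹ : A) * π z a * ↑(σ (φ u)) := by
    intro u z
    conv_lhs => rw [← hafix' u, ← hπ_sum a]
    rw [Finset.mul_sum, Finset.sum_mul, map_sum]
    rw [Finset.sum_eq_single z]
    · exact hπ_same (hT_mem u (hπ_mem z a))
    · intro w _ hw
      exact hπ_ne (hT_mem u (hπ_mem w a)) fun h => hw (hfinj u h)
    · intro h; exact absurd (Finset.mem_univ z) h
  -- components outside the orbit vanish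
  have hsupp : ∀ w : G ⧸ H, w ∉ Set.range (fun u : ↥P => f u xbar) → π w a = 0 := by
    intro w hw
    have hle : (⨆ z ∈ Set.range (fun u : ↥P => f u xbar), 𝒜 z) ≤ LinearMap.ker (π w) := by
      refine iSup₂_le fun z hz => ?_
      intro b hb
      exact hπ_ne hb (fun h => hw (h ▸ hz))
    exact hle haO
  -- the stabilizer of xbar
  set S : Subgroup ↥P :=
    { carrier := {u | f u xbar = xbar}
      one_mem' := hf1 xbar
      mul_mem' := by
        intro u v hu hv
        show f (u * v) xbar = xbar
        rw [hfmul, hu, hv]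
      inv_mem' := by
        intro u hu
        show f u⁻¹ xbar = xbar
        conv_lhs => rw [← hu, hfinv] } with hSdef
  have hSmem : ∀ u : ↥P, u ∈ S ↔ f u xbar = xbar := fun u => Iff.rfl
  have hSlt : S < ⊤ := by
    rw [lt_top_iff_ne_top]
    intro hcon
    obtain ⟨y1, ⟨u1, hu1⟩, y2, ⟨u2, hu2⟩, hne⟩ := hO
    have e1 : f u1 xbar = xbar := (hSmem u1).1 (hcon ▸ Subgroup.mem_top u1)
    have e2 : f u2 xbar = xbar := (hSmem u2).1 (hcon ▸ Subgroup.mem_top u2)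
    exact hne (by rw [← hu1, ← hu2]; show f u1 xbar = f u2 xbar; rw [e1, e2])
  set c : A := π xbar a with hcdef
  have hc : c ∈ intFixed 𝒪 σ φ S := by
    intro u hu
    have h := key u xbar
    rw [(hSmem u).1 hu] at h
    calc (↑(σ u) : A) * c = ↑(σ u) * ((↑(σ u)⁻¹ : A) * π xbar a * ↑(σ (φ u))) := by rw [← h]
      _ = c * ↑(σ (φ u)) := by rw [← mul_assoc, ← mul_assoc]; simp [hcdef]
  -- a equals the relative trace of c from S
  have hrel : relTr σ φ S c = a := by
    letI : Fintype (Quotient (QuotientGroup.rightRel S)) := Fintype.ofFinite _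
    set g : Quotient (QuotientGroup.rightRel S) → G ⧸ H := fun x => f x.out xbar with hgdef
    have hgwd : ∀ u : ↥P, g ⟦u⟧ = f u xbar := by
      intro u
      have hr : u * (Quotient.mk (QuotientGroup.rightRel S) u).out⁻¹ ∈ S := by
        rw [← QuotientGroup.rightRel_apply]
        exact Quotient.exact (Quotient.out_eq _)
      have : f u xbar = f ((u * (⟦u⟧ : Quotient (QuotientGroup.rightRel S)).out⁻¹) *
          (⟦u⟧ : Quotient (QuotientGroup.rightRel S)).out) xbar := by
        rw [inv_mul_cancel_right]
      rw [this, hfmul, (hSmem _).1 hr]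
    have hginj : Function.Injective g := by
      intro x y hxy
      have hxy' : f x.out xbar = f y.out xbar := hxy
      have h1 : f (x.out * y.out⁻¹) xbar = xbar := by
        rw [hfmul, hxy']
        exact hfinv y.out xbar
      have hS1 : x.out * y.out⁻¹ ∈ S := h1
      have h2 : y.out * x.out⁻¹ ∈ S := by simpa using S.inv_mem hS1
      rw [← Quotient.out_eq x, ← Quotient.out_eq y]
      exact Quotient.sound ((QuotientGroup.rightRel_apply).2 h2)
    have hgrange : Set.range (fun u : ↥P => f u xbar) = Set.range g := by
      ext z
      constructor
      · rintro ⟨u, rfl⟩; exact ⟨⟦u⟧, hgwd u⟩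
      · rintro ⟨x, rfl⟩; exact ⟨x.out, rfl⟩
    calc relTr σ φ S c
        = ∑ x : Quotient (QuotientGroup.rightRel S),
            (↑(σ x.out)⁻¹ : A) * c * ↑(σ (φ x.out)) := finsum_eq_sum_of_fintype _
      _ = ∑ x : Quotient (QuotientGroup.rightRel S), π (g x) a := by
          refine Finset.sum_congr rfl fun x _ => ?_
          rw [hgdef, key x.out xbar]
      _ = ∑ z ∈ Finset.image g Finset.univ, π z a :=
          (Finset.sum_image (f := fun z => (π z) a) (g := g) (fun x _ y _ h => hginj h)).symm
      _ = ∑ z : G ⧸ H, π z a := by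
          refine Finset.sum_subset (Finset.subset_univ _) ?_
          intro z _ hz
          refine hsupp z fun hmemz => hz ?_
          rw [hgrange] at hmemz
          obtain ⟨x, hx⟩ := hmemz
          exact Finset.mem_image.2 ⟨x, Finset.mem_univ x, hx⟩
      _ = a := hπ_sum a
  have : a ∈ Submodule.span 𝒪 (relTr σ φ S '' (intFixed 𝒪 σ φ S)) :=
    Submodule.subset_span ⟨c, hc, hrel⟩
  exact le_iSup (fun Q : {Q : Subgroup ↥P // Q < ⊤} =>
    Submodule.span 𝒪 (relTr σ φ ↑Q '' (intFixed 𝒪 σ φ ↑Q))) ⟨S, hSlt⟩ this
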